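/- Let H be a connected finite simple block graph and let B be a block of H with vertex set V(B) = {u_1, u_2, …, u_k}. For each 1 ≤ i ≤ k, let G_i denote the connected component containing u_i of the subgraph of H induced by (V(H) ∖ V(B)) ∪ {u_i}, and for S ⊆ V(H) write S_i = S ∩ V(G_i). If S is a paired-dominating set of H with u_1 ∉ S, then u_1 ∉ S_1, the induced subgraph G_1[S_1] has a perfect matching, and S_1 dominates every vertex of V(G_1) ∖ ({u_1} ∪ S_1); consequently, either S_1 is a paired-dominating set of G_1 not containing u_1, or S_1 is a paired-dominating set of the graph G_1 − u_1 such that no vertex of S_1 is adjacent to u_1. -/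

import Mathlib

open SimpleGraph

variable {V : Type*}

/-- `S` is a dominating set of `G`. -/
def Dominating (G : SimpleGraph V) (S : Set V) : Prop :=
  ∀ v ∉ S, ∃ u ∈ S, G.Adj v u

/-- Within the subgraph of `G` induced by `A` (for `S ⊆ A`), the set `S` dominates
every vertex of `A \ S`. -/
def DominatingOn (G : SimpleGraph V) (A S : Set V) : Prop :=
  ∀ v ∈ A, v ∉ S → ∃ w ∈ S, G.Adj v w

/-- The induced subgraph `G[S]` has a perfect matching, i.e. there is a matching of `G`
whose vertex set is exactly `S`. -/
def HasPerfectMatchingOn (G : SimpleGraph V) (S : Set V) : Prop :=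
  ∃ M : G.Subgraph, M.verts = S ∧ M.IsMatching

/-- `S` is a paired-dominating set of `G`. -/
def PairedDominating (G : SimpleGraph V) (S : Set V) : Prop :=
  Dominating G S ∧ HasPerfectMatchingOn G S

/-- `v` is a cut vertex: deleting it disconnects the graph. -/
def IsCutVertex (G : SimpleGraph V) (v : V) : Prop :=
  ¬ (G.induce ({v}ᶜ : Set V)).Preconnected

/-- The graph has no cut vertex. -/
def HasNoCutVertex (G : SimpleGraph V) : Prop :=
  ∀ v : V, ¬ IsCutVertex G v

/-- `B` is a block of `G`: a maximal vertex set inducing a connected subgraph with no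
cut vertex. -/
def IsBlock (G : SimpleGraph V) (B : Set V) : Prop :=
  (G.induce B).Connected ∧ HasNoCutVertex (G.induce B) ∧
    ∀ B' : Set V, B ⊆ B' → (G.induce B').Connected → HasNoCutVertex (G.induce B') → B' = B

/-- `G` is a block graph: every block is a complete subgraph. -/
def IsBlockGraph (G : SimpleGraph V) : Prop :=
  ∀ B : Set V, IsBlock G B → B.Pairwise G.Adj

/-- The vertex set of the connected component containing `u` of the subgraph of `G`
induced by `A`. -/
def componentOf (G : SimpleGraph V) (A : Set V) (u : V) : Set V :=
  {v | ∃ (hu : u ∈ A) (hv : v ∈ A), (G.induce A).Reachable ⟨u, hu⟩ ⟨v, hv⟩}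

/-!
Let `u₁ ∈ B`, `G₁` the component of `u₁` after deleting `B \ {u₁}`. A vertex `w ≠ u₁` of `G₁`
has no neighbour in `B \ {u₁}`: otherwise a path from `u₁` to `w` in `G₁`, closed up through that
neighbour, is a path between two vertices of the clique `B`, and the clique together with such a
path induces a connected subgraph without cut vertex, contradicting the maximality of the block.
So every neighbour of a vertex of `G₁ \ {u₁}` lies in `G₁`; as `u₁ ∉ S`, the matching partners
and the dominating neighbours of vertices of `S₁ = S ∩ G₁` and of `G₁ \ {u₁}` stay in `G₁`.
-/

namespace SimpleGraph

variable {G : SimpleGraph V} [DecidableEq V]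

lemma Walk.IsPath.notMem_support_takeUntil_or_dropUntil {s t a x : V} {p : G.Walk s t}
    (hp : p.IsPath) (ha : a ∈ p.support) (hxa : x ≠ a) :
    x ∉ (p.takeUntil a ha).support ∨ x ∉ (p.dropUntil a ha).support := by
  by_contra! h
  rw [← p.take_spec ha] at hp
  exact hp.ne_of_mem_support_of_append hxa h.1 h.2 rfl

lemma Walk.IsPath.exists_walk_to_end_avoiding {s t a x : V} {p : G.Walk s t}
    (hp : p.IsPath) (ha : a ∈ p.support) (hxa : x ≠ a) :
    ∃ e ∈ ({s, t} : Set V), ∃ q : G.Walk a e,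
      x ∉ q.support ∧ ∀ z ∈ q.support, z ∈ p.support := by
  rcases hp.notMem_support_takeUntil_or_dropUntil ha hxa with h | h
  · refine ⟨s, Or.inl rfl, (p.takeUntil a ha).reverse, by simpa using h, fun z hz => ?_⟩
    rw [Walk.support_reverse, List.mem_reverse] at hz
    exact p.support_takeUntil_subset_support ha hz
  · exact ⟨t, Or.inr rfl, p.dropUntil a ha, h,
      fun z hz => p.support_dropUntil_subset_support ha hz⟩

/-- Each vertex of `p` other than `x` reaches an end of `p` along `p` while avoiding `x`, and the
ends lie in `B`, which is still a clique after deleting `x`. -/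
lemma IsClique.preconnected_induce_union_support_diff {B : Set V} (hB : G.IsClique B)
    {s t : V} (hs : s ∈ B) (ht : t ∈ B) {p : G.Walk s t} (hp : p.IsPath) (x : V) :
    (G.induce ((B ∪ {z | z ∈ p.support}) \ {x})).Preconnected := by
  set X := (B ∪ {z | z ∈ p.support}) \ {x}
  have hclique : ∀ (b b' : V) (hb : b ∈ B \ {x}) (hb' : b' ∈ B \ {x}),
      (G.induce X).Reachable ⟨b, Or.inl hb.1, hb.2⟩ ⟨b', Or.inl hb'.1, hb'.2⟩ := by
    intro b b' hb hb'
    by_cases hbb' : b = b'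
    · subst hbb'; rfl
    · exact Adj.reachable (hB hb.1 hb'.1 hbb')
  have hreach : ∀ a : X, ∃ (b : V) (hb : b ∈ B \ {x}),
      (G.induce X).Reachable a ⟨b, Or.inl hb.1, hb.2⟩ := by
    rintro ⟨a, haB | hap, hax⟩
    · exact ⟨a, ⟨haB, hax⟩, Reachable.refl _⟩
    · obtain ⟨e, he, q, hxq, hqp⟩ := hp.exists_walk_to_end_avoiding hap (Ne.symm hax)
      have heB : e ∈ B := by rcases he with rfl | rfl <;> assumption
      have hex : e ∉ ({x} : Set V) := fun h => hxq (h ▸ q.end_mem_support)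
      refine ⟨e, ⟨heB, hex⟩, ⟨q.induce X fun z hz => ⟨Or.inr (hqp z hz), ?_⟩⟩⟩
      rintro rfl
      exact hxq hz
  intro a a'
  obtain ⟨b, hb, hab⟩ := hreach a
  obtain ⟨b', hb', hab'⟩ := hreach a'
  exact hab.trans ((hclique b b' hb hb').trans hab'.symm)

end SimpleGraph

variable {G : SimpleGraph V}

lemma hasNoCutVertex_induce_of_forall_preconnected {X : Set V}
    (h : ∀ x, (G.induce (X \ {x})).Preconnected) : HasNoCutVertex (G.induce X) := by
  rintro ⟨x, hx⟩ hcut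
  let f : G.induce (X \ {x}) →g (G.induce X).induce {⟨x, hx⟩}ᶜ :=
    { toFun := fun y => ⟨⟨y.1, y.2.1⟩, fun hy => y.2.2 (congrArg Subtype.val hy)⟩
      map_rel' := id }
  refine hcut ((h x).map f ?_)
  rintro ⟨⟨y, hyX⟩, hyx⟩
  exact ⟨⟨y, hyX, fun hy => hyx (Subtype.ext hy)⟩, rfl⟩

lemma IsBlock.support_subset_of_isPath {B : Set V} (hB : IsBlock G B) (hcl : G.IsClique B)
    {s t : V} (hs : s ∈ B) (ht : t ∈ B) {p : G.Walk s t} (hp : p.IsPath) :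
    {z | z ∈ p.support} ⊆ B := by
  classical
  have hBpre : (G.induce B).Preconnected := by
    rw [induce_eq_top.mpr hcl]
    exact preconnected_top
  have hconn : (G.induce (B ∪ {z | z ∈ p.support})).Connected :=
    induce_union_connected hBpre p.connected_induce_support.preconnected
      ⟨s, hs, p.start_mem_support⟩
  have hnocut : HasNoCutVertex (G.induce (B ∪ {z | z ∈ p.support})) :=
    hasNoCutVertex_induce_of_forall_preconnected
      (hcl.preconnected_induce_union_support_diff hs ht hp)
  rw [← hB.2.2 _ Set.subset_union_left hconn hnocut]
  exact Set.subset_union_right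

lemma mem_componentOf_self {A : Set V} {u : V} (hu : u ∈ A) : u ∈ componentOf G A u :=
  ⟨hu, hu, Reachable.refl _⟩

lemma mem_componentOf_of_adj {A : Set V} {u v x : V} (hv : v ∈ componentOf G A u) (hx : x ∈ A)
    (hvx : G.Adj v x) : x ∈ componentOf G A u := by
  obtain ⟨hu, hvA, hreach⟩ := hv
  have hvx' : (G.induce A).Adj ⟨v, hvA⟩ ⟨x, hx⟩ := hvx
  exact ⟨hu, hx, hreach.trans hvx'.reachable⟩

lemma IsBlock.not_adj_of_mem_componentOf {B : Set V} (hB : IsBlock G B) (hcl : G.IsClique B)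
    {u w x : V} (hu : u ∈ B) (hw : w ∈ componentOf G (Bᶜ ∪ {u}) u) (hwu : w ≠ u)
    (hx : x ∈ B) (hxu : x ≠ u) : ¬ G.Adj w x := by
  intro hwx
  obtain ⟨huA, hwA, hreach⟩ := hw
  obtain ⟨π, hπ⟩ := hreach.exists_isPath
  let π' : G.Walk u w := π.map (Embedding.induce _).toHom
  have hπ' : π'.IsPath := hπ.map Subtype.val_injective
  have hπ'A : ∀ z ∈ π'.support, z ∈ Bᶜ ∪ {u} := by
    intro z hz
    obtain ⟨z', -, rfl⟩ := List.mem_map.mp (Walk.support_map _ π ▸ hz)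
    exact z'.2
  have hxπ' : x ∉ π'.support := fun h => (hπ'A x h).elim (· hx) hxu
  have hP : (Walk.cons hwx.symm π'.reverse).IsPath :=
    hπ'.reverse.cons (by simpa using hxπ')
  have hwB : w ∈ B := hB.support_subset_of_isPath hcl hx hu hP (by simp)
  exact (hπ'A w π'.end_mem_support).elim (· hwB) hwu

lemma IsBlock.mem_componentOf_of_adj {B : Set V} (hB : IsBlock G B) (hcl : G.IsClique B)
    {u v x : V} (hu : u ∈ B) (hv : v ∈ componentOf G (Bᶜ ∪ {u}) u) (hvu : v ≠ u)
    (hvx : G.Adj v x) : x ∈ componentOf G (Bᶜ ∪ {u}) u := by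
  by_cases hxB : x ∈ B
  · by_cases hxu : x = u
    · exact hxu ▸ mem_componentOf_self (Or.inr rfl)
    · exact absurd hvx (hB.not_adj_of_mem_componentOf hcl hu hv hvu hxB hxu)
  · exact _root_.mem_componentOf_of_adj hv (Or.inl hxB) hvx

lemma SimpleGraph.Subgraph.IsMatching.hasPerfectMatchingOn_inter {M : G.Subgraph}
    (hM : M.IsMatching) {T : Set V} (hT : ∀ v ∈ M.verts ∩ T, ∀ w, M.Adj v w → w ∈ T) :
    HasPerfectMatchingOn G (M.verts ∩ T) := by
  refine ⟨M.induce (M.verts ∩ T), rfl, fun v hv => ?_⟩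
  obtain ⟨w, hvw, hw⟩ := hM hv.1
  exact ⟨w, ⟨hv, ⟨M.edge_vert hvw.symm, hT v hv w hvw⟩, hvw⟩, fun y hy => hw y hy.2.2⟩

theorem stmt_10 {V : Type*} (H : SimpleGraph V)
    (hbg : IsBlockGraph H) (B : Set V) (hB : IsBlock H B)
    (k : ℕ) (hk : 0 < k) (u : Fin k → V)
    (hurange : Set.range u = B)
    (G' : Fin k → Set V) (hG' : ∀ i : Fin k, G' i = componentOf H (Bᶜ ∪ {u i}) (u i))
    (S : Set V) (hpd : PairedDominating H S) (hu₁ : u ⟨0, hk⟩ ∉ S) :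
    u ⟨0, hk⟩ ∉ S ∩ G' ⟨0, hk⟩ ∧
      HasPerfectMatchingOn H (S ∩ G' ⟨0, hk⟩) ∧
      (∀ v ∈ G' ⟨0, hk⟩, v ∉ S ∩ G' ⟨0, hk⟩ → v ≠ u ⟨0, hk⟩ →
        ∃ w ∈ S ∩ G' ⟨0, hk⟩, H.Adj v w) ∧
      ((DominatingOn H (G' ⟨0, hk⟩) (S ∩ G' ⟨0, hk⟩) ∧
          HasPerfectMatchingOn H (S ∩ G' ⟨0, hk⟩) ∧ u ⟨0, hk⟩ ∉ S ∩ G' ⟨0, hk⟩) ∨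
        (DominatingOn H (G' ⟨0, hk⟩ \ {u ⟨0, hk⟩}) (S ∩ G' ⟨0, hk⟩) ∧
          HasPerfectMatchingOn H (S ∩ G' ⟨0, hk⟩) ∧
          ∀ w ∈ S ∩ G' ⟨0, hk⟩, ¬ H.Adj (u ⟨0, hk⟩) w)) := by
  set u₁ := u ⟨0, hk⟩
  rw [hG' ⟨0, hk⟩]
  set G₁ := componentOf H (Bᶜ ∪ {u₁}) u₁
  obtain ⟨hdom, M, rfl, hM⟩ := hpd
  have hclosed : ∀ v ∈ G₁, v ≠ u₁ → ∀ x, H.Adj v x → x ∈ G₁ := fun v hv hvu _ =>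
    hB.mem_componentOf_of_adj (hbg B hB) (hurange ▸ Set.mem_range_self _) hv hvu
  have hu₁S₁ : u₁ ∉ M.verts ∩ G₁ := fun h => hu₁ h.1
  have hpm : HasPerfectMatchingOn H (M.verts ∩ G₁) :=
    hM.hasPerfectMatchingOn_inter fun v hv w hvw =>
      hclosed v hv.2 (ne_of_mem_of_not_mem hv.1 hu₁) w (M.adj_sub hvw)
  have hdom₁ : ∀ v ∈ G₁, v ∉ M.verts ∩ G₁ → v ≠ u₁ → ∃ w ∈ M.verts ∩ G₁, H.Adj v w := by
    intro v hv hvS hvu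
    obtain ⟨w, hwS, hvw⟩ := hdom v fun h => hvS ⟨h, hv⟩
    exact ⟨w, ⟨hwS, hclosed v hv hvu w hvw⟩, hvw⟩
  refine ⟨hu₁S₁, hpm, hdom₁, ?_⟩
  by_cases hcase : ∃ w ∈ M.verts ∩ G₁, H.Adj u₁ w
  · refine Or.inl ⟨fun v hv hvS => ?_, hpm, hu₁S₁⟩
    by_cases hvu : v = u₁
    · exact hvu ▸ hcase
    · exact hdom₁ v hv hvS hvu
  · push Not at hcase
    exact Or.inr ⟨fun v hv hvS => hdom₁ v hv.1 hvS hv.2, hpm, hcase⟩
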